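/- Let G be a topological group with a tower of closed subgroups (G_n)_{n≥1}, and let (G_{n(i)})_{i≥1} be any subsequence of the tower. Then the multiplication map p : ⊡_{n≥1} G_n → G has a local section at e if and only if the multiplication map p' : ⊡_{i≥1} G_{n(i)} → G has a local section at e. -/

import Mathlib

/-- The box topology on the product of the subgroups of a tower. -/
def boxTopOfTower {G : Type*} [Group G] [TopologicalSpace G]
    (K : ℕ → Subgroup G) : TopologicalSpace (∀ n, ↥(K n)) :=
  TopologicalSpace.generateFrom
    {S | ∃ U : ∀ n, Set ↥(K n), (∀ n, IsOpen (U n)) ∧ S = Set.univ.pi U}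

/-- The small box product of a tower of subgroups: sequences with all but finitely
many coordinates equal to the identity. -/
def SBox {G : Type*} [Group G] [TopologicalSpace G] (K : ℕ → Subgroup G) : Type _ :=
  {x : ∀ n, ↥(K n) // {n | (x n : G) ≠ 1}.Finite}

instance {G : Type*} [Group G] [TopologicalSpace G] (K : ℕ → Subgroup G) :
    TopologicalSpace (SBox K) :=
  TopologicalSpace.induced (fun x => x.1) (boxTopOfTower K)

/-- The multiplication map `⊡ₙ Gₙ → G`, sending an eventually-trivial sequence to the
ordered product of its entries. -/
noncomputable def sboxMul {G : Type*} [Group G] [TopologicalSpace G]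
    (K : ℕ → Subgroup G) (x : SBox K) : G :=
  ((List.range (x.2.toFinset.sup id + 1)).map (fun n => (x.1 n : G))).prod

/-- The multiplication map has a local section at the identity. -/
def HasLocalSectionAtOne {G : Type*} [Group G] [TopologicalSpace G]
    (K : ℕ → Subgroup G) (f : SBox K → G) : Prop :=
  ∃ U ∈ nhds (1 : G), ∃ s : G → SBox K, ContinuousOn s U ∧ ∀ g ∈ U, f (s g) = g

/-!
Group the coordinates of `⊡ₙ Gₙ` into the consecutive blocks `(m (i-1), m i]` and multiply each
block: this gives `π : ⊡ₙ Gₙ → ⊡ᵢ G_{m i}`. Placing the `i`-th coordinate at position `m i` and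
`1` elsewhere gives `η` in the other direction. Both maps preserve the ordered product, and both
are continuous for the box topologies, because every output coordinate is a continuous function
of finitely many input coordinates and distinct output coordinates read disjoint sets of inputs.
Composing a local section with `π` or with `η` gives a local section of the other multiplication
map.
-/

open List Topology

section BoxTopology

variable {ι κ : Type*} {X : ι → Type*} {Y : κ → Type*}
  [∀ i, TopologicalSpace (X i)] [∀ j, TopologicalSpace (Y j)]

def boxTopology (X : ι → Type*) [∀ i, TopologicalSpace (X i)] : TopologicalSpace (∀ i, X i) :=
  TopologicalSpace.generateFrom
    {S | ∃ U : ∀ i, Set (X i), (∀ i, IsOpen (U i)) ∧ S = Set.univ.pi U}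

theorem isOpen_boxTopology_pi {U : ∀ i, Set (X i)} (hU : ∀ i, IsOpen (U i)) :
    IsOpen[boxTopology X] (Set.univ.pi U) :=
  TopologicalSpace.isOpen_generateFrom_of_mem ⟨U, hU, rfl⟩

/-- The fibres of `b` are disjoint, so a box neighbourhood can be assembled from product
neighbourhoods chosen separately for each output coordinate. -/
theorem continuous_boxTopology_of_dependsOn (b : ι → κ) {f : (∀ i, X i) → ∀ j, Y j}
    (hcont : ∀ j, Continuous fun x => f x j)
    (hdep : ∀ j, DependsOn (fun x => f x j) (b ⁻¹' {j})) :
    Continuous[boxTopology X, boxTopology Y] f := by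
  classical
  refine continuous_generateFrom_iff.2 ?_
  rintro _ ⟨U, hU, rfl⟩
  refine (@isOpen_iff_forall_mem_open _ (boxTopology X) _).2 fun x hx => ?_
  choose I u hu hsub using fun j =>
    isOpen_pi_iff.1 ((hU j).preimage (hcont j)) x (hx j (Set.mem_univ j))
  refine ⟨Set.univ.pi fun i => if i ∈ I (b i) then u (b i) i else Set.univ, ?_,
    isOpen_boxTopology_pi fun i => ?_, fun i _ => ?_⟩
  · intro y hy j _
    let y' : ∀ i, X i := fun i => if b i = j then y i else x i
    have hy' : y' ∈ (I j : Set ι).pi (u j) := by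
      intro i hi
      by_cases hbi : b i = j
      · subst hbi
        have hyi : y i ∈ if i ∈ I (b i) then u (b i) i else Set.univ := hy i (Set.mem_univ i)
        rw [if_pos (Finset.mem_coe.1 hi)] at hyi
        simpa [y'] using hyi
      · simpa [y', hbi] using (hu j i hi).2
    have hyy' : f y j = f y' j := hdep j fun i hbi => (if_pos hbi).symm
    simpa [hyy'] using hsub j hy'
  · split_ifs with hi
    exacts [(hu _ i hi).1, isOpen_univ]
  · dsimp only
    split_ifs with hi
    exacts [(hu _ i hi).2, Set.mem_univ _]

end BoxTopology

section ProdRange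

variable {M : Type*} [Monoid M] (f : ℕ → M)

theorem prod_range_eq_of_forall_le_eq_one {N₁ N₂ : ℕ} (h₁ : ∀ n, N₁ ≤ n → f n = 1)
    (h₂ : ∀ n, N₂ ≤ n → f n = 1) : ((range N₁).map f).prod = ((range N₂).map f).prod := by
  wlog hN : N₁ ≤ N₂ generalizing N₁ N₂
  · exact (this h₂ h₁ (le_of_not_ge hN)).symm
  have htail : ((Ico N₁ N₂).map f).prod = 1 :=
    prod_eq_one <| forall_mem_map.2 fun n hn => h₁ n (Ico.mem.1 hn).1
  rw [← Ico.zero_bot, ← Ico.zero_bot, ← Ico.append_consecutive (Nat.zero_le N₁) hN, map_append,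
    prod_append, htail, mul_one]

theorem prod_range_prod_Ico {s : ℕ → ℕ} (hs : Monotone s) (h0 : s 0 = 0) (j : ℕ) :
    ((range j).map fun i => ((Ico (s i) (s (i + 1))).map f).prod).prod =
      ((range (s j)).map f).prod := by
  induction j with
  | zero => simp [h0]
  | succ j ih =>
    rw [range_succ, map_append, prod_append, ih, map_singleton, prod_singleton,
      ← Ico.zero_bot, ← Ico.zero_bot, ← prod_append, ← map_append,
      Ico.append_consecutive (Nat.zero_le _) (hs j.le_succ)]

end ProdRange

section BlockIndex

variable {s : ℕ → ℕ} (hs : StrictMono s)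

noncomputable def blockIndex (n : ℕ) : ℕ :=
  Nat.find (⟨n, Nat.lt_of_lt_of_le n.lt_succ_self hs.le_apply⟩ : ∃ i, n < s (i + 1))

theorem blockIndex_eq_iff (h0 : s 0 = 0) {n i : ℕ} :
    blockIndex hs n = i ↔ n ∈ Ico (s i) (s (i + 1)) := by
  rw [blockIndex, Nat.find_eq_iff, Ico.mem, and_comm (a := s i ≤ n)]
  refine and_congr_right fun _ => ⟨fun h => ?_, fun h k hk => ?_⟩
  · cases i with
    | zero => exact h0.le.trans (Nat.zero_le n)
    | succ i => exact not_lt.1 (h i i.lt_succ_self)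
  · exact not_lt.2 ((hs.monotone hk).trans h)

end BlockIndex

namespace SBox

variable {G H : Type*} [Group G] [TopologicalSpace G] [Group H] [TopologicalSpace H]
  {K : ℕ → Subgroup G} {L : ℕ → Subgroup H}

theorem exists_forall_le_eq_one (x : SBox K) : ∃ N, ∀ n, N ≤ n → (x.1 n : G) = 1 := by
  obtain ⟨N, hN⟩ := x.2.bddAbove
  exact ⟨N + 1, fun n hn => by_contra fun h => absurd (hN h) (by omega)⟩

theorem sboxMul_eq_prod_range {x : SBox K} {N : ℕ} (hN : ∀ n, N ≤ n → (x.1 n : G) = 1) :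
    sboxMul K x = ((range N).map fun n => (x.1 n : G)).prod := by
  refine prod_range_eq_of_forall_le_eq_one _ (fun n hn => by_contra fun h => ?_) hN
  have := Finset.le_sup (f := id) (x.2.mem_toFinset.2 h)
  simp only [id] at this
  omega

def map (F : (∀ n, K n) → ∀ i, L i) (hF : ∀ x : SBox K, {i | (F x.1 i : H) ≠ 1}.Finite)
    (x : SBox K) : SBox L :=
  ⟨F x.1, hF x⟩

theorem continuous_map {F : (∀ n, K n) → ∀ i, L i}
    (hF : ∀ x : SBox K, {i | (F x.1 i : H) ≠ 1}.Finite)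
    (hcont : Continuous[boxTopOfTower K, boxTopOfTower L] F) : Continuous (map F hF) :=
  (continuous_induced_rng (t₂ := boxTopOfTower L)).2 <|
    @Continuous.comp (SBox K) (∀ n, K n) (∀ i, L i) _ (boxTopOfTower K) (boxTopOfTower L) _ F
      hcont continuous_induced_dom

end SBox

theorem HasLocalSectionAtOne.of_comp {G : Type*} [Group G] [TopologicalSpace G]
    {K L : ℕ → Subgroup G} {f : SBox K → G} {g : SBox L → G} (φ : SBox K → SBox L)
    (hφ : Continuous φ) (hgφ : ∀ x, g (φ x) = f x) (h : HasLocalSectionAtOne K f) :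
    HasLocalSectionAtOne L g := by
  obtain ⟨U, hU, σ, hσ, hfσ⟩ := h
  exact ⟨U, hU, φ ∘ σ, hφ.comp_continuousOn hσ, fun u hu => (hgφ _).trans (hfσ u hu)⟩

section Subsequence

variable {G : Type*} [Group G] {K : ℕ → Subgroup G} {m : ℕ → ℕ}

/-- `blockStart m i` is the first index of the `i`-th block `(m (i-1), m i]`. -/
def blockStart (m : ℕ → ℕ) : ℕ → ℕ
  | 0 => 0
  | i + 1 => m i + 1

theorem strictMono_blockStart (hm : StrictMono m) : StrictMono (blockStart m) :=
  strictMono_nat_of_lt_succ fun i => by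
    cases i with
    | zero => exact Nat.succ_pos _
    | succ i => exact Nat.succ_lt_succ (hm i.lt_succ_self)

theorem mem_Ico_blockStart (hm : StrictMono m) (i : ℕ) :
    m i ∈ Ico (blockStart m i) (blockStart m (i + 1)) :=
  Ico.mem.2 ⟨Nat.le_of_lt_succ (strictMono_blockStart hm i.lt_succ_self), m i |>.lt_succ_self⟩

def blockProd (hK : Monotone K) (m : ℕ → ℕ) (x : ∀ n, K n) (i : ℕ) : K (m i) :=
  ⟨((Ico (blockStart m i) (blockStart m (i + 1))).map fun n => (x n : G)).prod,
    list_prod_mem <| forall_mem_map.2 fun n hn =>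
      hK (Nat.le_of_lt_succ (Ico.mem.1 hn).2) (x n).2⟩

theorem blockProd_eq_one (hK : Monotone K) (hm : StrictMono m) {x : ∀ n, K n} {N i : ℕ}
    (hN : ∀ n, N ≤ n → (x n : G) = 1) (hi : N ≤ i) : (blockProd hK m x i : G) = 1 :=
  prod_eq_one <| forall_mem_map.2 fun n hn =>
    hN n (hi.trans <| (strictMono_blockStart hm).le_apply.trans (Ico.mem.1 hn).1)

noncomputable def spread (hm : StrictMono m) (y : ∀ i, K (m i)) (n : ℕ) : K n :=
  ⟨Function.extend m (fun i => (y i : G)) 1 n, by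
    by_cases h : ∃ i, m i = n
    · obtain ⟨i, rfl⟩ := h
      rw [hm.injective.extend_apply]
      exact (y i).2
    · rw [Function.extend_apply' _ _ _ h]
      exact one_mem _⟩

theorem spread_apply_self (hm : StrictMono m) (y : ∀ i, K (m i)) (i : ℕ) :
    (spread hm y (m i) : G) = y i :=
  hm.injective.extend_apply (fun i => (y i : G)) 1 i

theorem spread_apply_of_not_mem_range (hm : StrictMono m) (y : ∀ i, K (m i)) {n : ℕ}
    (h : ¬∃ i, m i = n) : (spread hm y n : G) = 1 :=
  Function.extend_apply' (fun i => (y i : G)) (1 : ℕ → G) n h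

theorem blockProd_spread (hK : Monotone K) (hm : StrictMono m) (y : ∀ i, K (m i)) (i : ℕ) :
    (blockProd hK m (spread hm y) i : G) = y i := by
  have hs := strictMono_blockStart hm
  have hmi := mem_Ico_blockStart hm i
  have hrest : ((Ico (blockStart m i) (m i)).map fun n => (spread hm y n : G)).prod = 1 := by
    refine prod_eq_one <| forall_mem_map.2 fun n hn => spread_apply_of_not_mem_range hm y ?_
    rintro ⟨k, rfl⟩
    have hn' := Ico.mem.1 hn
    have hk : k = i := by
      rw [← (blockIndex_eq_iff hs rfl).2 (mem_Ico_blockStart hm k),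
        (blockIndex_eq_iff hs rfl).2 (Ico.mem.2 ⟨hn'.1, hn'.2.trans (m i).lt_succ_self⟩)]
    exact hn'.2.ne (congrArg m hk)
  show ((Ico (blockStart m i) (m i + 1)).map fun n => (spread hm y n : G)).prod = y i
  rw [Ico.succ_top (Ico.mem.1 hmi).1, map_append, prod_append, hrest, one_mul, map_singleton,
    prod_singleton, spread_apply_self]

end Subsequence

namespace SBox

variable {G : Type*} [Group G] [TopologicalSpace G] {K : ℕ → Subgroup G} {m : ℕ → ℕ}

noncomputable def groupBlocks (hK : Monotone K) (hm : StrictMono m) :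
    SBox K → SBox (fun i => K (m i)) :=
  map (blockProd hK m) fun x => by
    obtain ⟨N, hN⟩ := x.exists_forall_le_eq_one
    exact (Set.finite_Iio N).subset fun i hi =>
      not_le.1 fun hNi => hi (blockProd_eq_one hK hm hN hNi)

theorem continuous_groupBlocks [ContinuousMul G] (hK : Monotone K) (hm : StrictMono m) :
    Continuous (groupBlocks hK hm) := by
  refine continuous_map _ <|
    continuous_boxTopology_of_dependsOn (blockIndex (strictMono_blockStart hm)) (fun i => ?_)
      fun i x y hxy => Subtype.ext <| congrArg List.prod <| map_congr_left fun n hn => ?_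
  · exact (continuous_list_prod _ fun n _ =>
      continuous_subtype_val.comp (continuous_apply n)).subtype_mk _
  · exact congrArg Subtype.val <| hxy n <|
      (blockIndex_eq_iff (strictMono_blockStart hm) rfl).2 hn

theorem sboxMul_groupBlocks (hK : Monotone K) (hm : StrictMono m) (x : SBox K) :
    sboxMul (fun i => K (m i)) (groupBlocks hK hm x) = sboxMul K x := by
  obtain ⟨N, hN⟩ := x.exists_forall_le_eq_one
  rw [sboxMul_eq_prod_range fun i => blockProd_eq_one hK hm hN,
    sboxMul_eq_prod_range fun n hn => hN n ((strictMono_blockStart hm).le_apply.trans hn)]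
  exact prod_range_prod_Ico _ (strictMono_blockStart hm).monotone rfl N

noncomputable def spread (hm : StrictMono m) : SBox (fun i => K (m i)) → SBox K :=
  map (_root_.spread hm) fun y =>
    (y.2.image m).subset fun n hn => by
      by_cases h : ∃ i, m i = n
      · obtain ⟨i, rfl⟩ := h
        exact ⟨i, fun hy => hn ((spread_apply_self hm y.1 i).trans hy), rfl⟩
      · exact absurd (spread_apply_of_not_mem_range hm y.1 h) hn

theorem continuous_spread (hm : StrictMono m) : Continuous (spread (K := K) hm) := by
  refine continuous_map _ <| continuous_boxTopology_of_dependsOn m (fun n => ?_)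
    fun n y z hyz => Subtype.ext ?_
  · by_cases h : ∃ i, m i = n
    · obtain ⟨i, rfl⟩ := h
      exact continuous_induced_rng.2 <| (continuous_subtype_val.comp (continuous_apply i)).congr
        fun y => (spread_apply_self hm y i).symm
    · exact (continuous_const (y := (1 : K n))).congr fun y =>
        Subtype.ext (spread_apply_of_not_mem_range hm y h).symm
  · by_cases h : ∃ i, m i = n
    · obtain ⟨i, rfl⟩ := h
      simp only [spread_apply_self, hyz i rfl]
    · simp only [spread_apply_of_not_mem_range hm _ h]

theorem sboxMul_spread (hK : Monotone K) (hm : StrictMono m) (y : SBox (fun i => K (m i))) :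
    sboxMul K (spread hm y) = sboxMul (fun i => K (m i)) y := by
  have hπη : groupBlocks hK hm (spread hm y) = y :=
    Subtype.ext <| funext fun i => Subtype.ext (blockProd_spread hK hm y.1 i)
  rw [← sboxMul_groupBlocks hK hm, hπη]

end SBox

theorem local_section_iff_subsequence_general
    {G : Type*} [Group G] [TopologicalSpace G] [IsTopologicalGroup G]
    (K : ℕ → Subgroup G)
    (htower : ∀ n, K n ≤ K (n + 1))
    (m : ℕ → ℕ) (hm : StrictMono m) :
    HasLocalSectionAtOne K (sboxMul K) ↔
      HasLocalSectionAtOne (fun i => K (m i)) (sboxMul (fun i => K (m i))) := by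
  have hK : Monotone K := monotone_nat_of_le_succ htower
  exact ⟨.of_comp _ (SBox.continuous_groupBlocks hK hm) (SBox.sboxMul_groupBlocks hK hm),
    .of_comp _ (SBox.continuous_spread hm) (SBox.sboxMul_spread hK hm)⟩

/-- The multiplication map of a tower of closed subgroups has a local section at the
identity iff the multiplication map of any subsequence of the tower does. -/
theorem local_section_iff_subsequence
    {G : Type*} [Group G] [TopologicalSpace G] [IsTopologicalGroup G]
    (K : ℕ → Subgroup G)
    (htower : ∀ n, K n ≤ K (n + 1))
    (hclosed : ∀ n, IsClosed ((K n : Set G)))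
    (hunion : ∀ g : G, ∃ n, g ∈ K n)
    (m : ℕ → ℕ) (hm : StrictMono m) :
    HasLocalSectionAtOne K (sboxMul K) ↔
      HasLocalSectionAtOne (fun i => K (m i)) (sboxMul (fun i => K (m i))) :=
  local_section_iff_subsequence_general K htower m hm
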